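/- arXiv:0908.0045 — 3 statements merged into one kernel-verified Lean document; each statement's English description precedes it below -/
import Mathlib

section
/- Let Φ = (φ_1, ..., φ_m) be a real p×m matrix whose columns all have unit Euclidean norm, and let μ(Φ) = max_{i≠j} |φ_iᵀ φ_j|. Then for any S ∈ [1,m] and any S-sparse vector c ∈ ℝ^m, ‖Φc‖₂² ≥ (1 - μ(Φ)·S)‖c‖₂². -/
/-!
Expanding `‖Φ c‖²` as the quadratic form of the Gram matrix `ΦᵀΦ`, the diagonal contributes
exactly `‖c‖²` (unit columns), while each off-diagonal term is at least `-μ |c_j| |c_k|`. Summing,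
`‖Φ c‖² ≥ (1 + μ) ‖c‖² - μ ‖c‖₁²`, and Cauchy–Schwarz on the support of `c` gives
`‖c‖₁² ≤ S ‖c‖²`.
-/

open Finset Matrix

theorem Finset.sum_sum_eq_sum_add_sum_offDiag {ι M : Type*} [DecidableEq ι] [AddCommMonoid M]
    (s : Finset ι) (f : ι → ι → M) :
    ∑ j ∈ s, ∑ k ∈ s, f j k = ∑ j ∈ s, f j j + ∑ x ∈ s.offDiag, f x.1 x.2 := by
  rw [← sum_product' s s f, ← diag_union_offDiag, sum_union (disjoint_diag_offDiag s), sum_diag]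

section

variable {ι : Type*} [Fintype ι]

theorem sq_sum_abs_le_card_support_mul_sum_sq (c : ι → ℝ) :
    (∑ i, |c i|) ^ 2 ≤ #{i | c i ≠ 0} * ∑ i, c i ^ 2 := by
  have hsupp : ∀ i ∈ univ, |c i| ≠ 0 → c i ≠ 0 := fun _ _ => abs_ne_zero.mp
  calc (∑ i, |c i|) ^ 2 = (∑ i with c i ≠ 0, |c i|) ^ 2 := by rw [sum_filter_of_ne hsupp]
    _ ≤ #{i | c i ≠ 0} * ∑ i with c i ≠ 0, |c i| ^ 2 := sq_sum_le_card_mul_sum_sq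
    _ = #{i | c i ≠ 0} * ∑ i, c i ^ 2 := by
      simp only [sq_abs]
      rw [sum_filter_of_ne fun _ _ => ne_zero_pow two_ne_zero]

theorem sum_offDiag_abs_mul_abs [DecidableEq ι] (c : ι → ℝ) :
    ∑ x ∈ univ.offDiag, |c x.1| * |c x.2| = (∑ i, |c i|) ^ 2 - ∑ i, c i ^ 2 := by
  rw [sq, sum_mul_sum, sum_sum_eq_sum_add_sum_offDiag]
  simp only [abs_mul_abs_self, sq]
  ring

theorem sum_diag_sub_le_dotProduct_mulVec {G : Matrix ι ι ℝ} {μ : ℝ}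
    (hG : ∀ j k, j ≠ k → |G j k| ≤ μ) (c : ι → ℝ) :
    ∑ j, G j j * c j ^ 2 - μ * ((∑ i, |c i|) ^ 2 - ∑ i, c i ^ 2) ≤ c ⬝ᵥ G *ᵥ c := by
  classical
  have hoffDiag :
      ∀ x ∈ univ.offDiag, -(μ * (|c x.1| * |c x.2|)) ≤ c x.1 * G x.1 x.2 * c x.2 := by
    rintro ⟨j, k⟩ hjk
    have hbound : |c j * G j k * c k| ≤ μ * (|c j| * |c k|) := by
      rw [abs_mul, abs_mul, mul_right_comm, mul_comm μ]
      exact mul_le_mul_of_nonneg_left (hG j k (mem_offDiag.mp hjk).2.2) (by positivity)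
    exact (neg_le_neg hbound).trans (neg_abs_le _)
  have hsum := sum_le_sum hoffDiag
  rw [sum_neg_distrib, ← mul_sum, sum_offDiag_abs_mul_abs] at hsum
  have hexpand : c ⬝ᵥ G *ᵥ c =
      ∑ j, G j j * c j ^ 2 + ∑ x ∈ univ.offDiag, c x.1 * G x.1 x.2 * c x.2 := by
    simp only [dotProduct, mulVec, mul_sum, ← mul_assoc]
    rw [sum_sum_eq_sum_add_sum_offDiag]
    simp only [sq]
    congr 1
    exact sum_congr rfl fun _ _ => by ring
  linarith

end

theorem transpose_mul_self_apply {κ ι : Type*} [Fintype κ] (Φ : Matrix κ ι ℝ) (j k : ι) :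
    (Φᵀ * Φ) j k = ∑ i, Φ i j * Φ i k := by
  simp only [mul_apply, transpose_apply]

section

variable {κ ι : Type*} [Fintype κ] [Fintype ι]

theorem sum_sq_mulVec_eq_dotProduct_gram (Φ : Matrix κ ι ℝ) (c : ι → ℝ) :
    ∑ i, (Φ *ᵥ c) i ^ 2 = c ⬝ᵥ (Φᵀ * Φ) *ᵥ c := by
  rw [← mulVec_mulVec, dotProduct_mulVec, vecMul_transpose]
  simp only [dotProduct, sq]

theorem one_add_mul_sum_sq_sub_le_sum_sq_mulVec {Φ : Matrix κ ι ℝ} {μ : ℝ}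
    (hcol : ∀ j, ∑ i, Φ i j ^ 2 = 1) (hμ : ∀ j k, j ≠ k → |∑ i, Φ i j * Φ i k| ≤ μ)
    (c : ι → ℝ) :
    (1 + μ) * ∑ i, c i ^ 2 - μ * (∑ i, |c i|) ^ 2 ≤ ∑ i, (Φ *ᵥ c) i ^ 2 := by
  have hdiag : ∀ j, (Φᵀ * Φ) j j = 1 := fun j => by
    rw [transpose_mul_self_apply, ← hcol j]
    simp only [sq]
  have hoff : ∀ j k, j ≠ k → |(Φᵀ * Φ) j k| ≤ μ := fun j k hjk => by
    rw [transpose_mul_self_apply]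
    exact hμ j k hjk
  have hquad := sum_diag_sub_le_dotProduct_mulVec hoff c
  simp only [hdiag, one_mul] at hquad
  rw [sum_sq_mulVec_eq_dotProduct_gram]
  linarith

end

theorem stmt3_general (p m : ℕ) (Φ : Matrix (Fin p) (Fin m) ℝ)
    (hcol : ∀ j, ∑ i, (Φ i j) ^ 2 = 1) (μ : ℝ)
    (hμ : IsGreatest {x : ℝ | ∃ i j : Fin m, i ≠ j ∧ x = |∑ k, Φ k i * Φ k j|} μ)
    (S : ℕ)
    (c : Fin m → ℝ)
    (hc : (Finset.univ.filter (fun i => c i ≠ 0)).card ≤ S) :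
    (1 - μ * S) * ∑ i, (c i) ^ 2 ≤ ∑ i, (Φ.mulVec c i) ^ 2 := by
  have hμ0 : 0 ≤ μ := by
    obtain ⟨i, j, -, rfl⟩ := hμ.1
    exact abs_nonneg _
  have hgram :=
    one_add_mul_sum_sq_sub_le_sum_sq_mulVec hcol (fun j k hjk => hμ.2 ⟨j, k, hjk, rfl⟩) c
  have hℓ1 : (∑ i, |c i|) ^ 2 ≤ S * ∑ i, c i ^ 2 :=
    (sq_sum_abs_le_card_support_mul_sum_sq c).trans (by gcongr)
  have hnorm : 0 ≤ μ * ∑ i, c i ^ 2 := mul_nonneg hμ0 (sum_nonneg fun i _ => sq_nonneg (c i))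
  linarith [mul_le_mul_of_nonneg_left hℓ1 hμ0]

/-- Lower RIP-type bound from incoherence. -/
theorem stmt3 (p m : ℕ) (Φ : Matrix (Fin p) (Fin m) ℝ)
    (hcol : ∀ j, ∑ i, (Φ i j) ^ 2 = 1) (μ : ℝ)
    (hμ : IsGreatest {x : ℝ | ∃ i j : Fin m, i ≠ j ∧ x = |∑ k, Φ k i * Φ k j|} μ)
    (S : ℕ) (hS1 : 1 ≤ S) (hSm : S ≤ m)
    (c : Fin m → ℝ)
    (hc : (Finset.univ.filter (fun i => c i ≠ 0)).card ≤ S) :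
    (1 - μ * S) * ∑ i, (c i) ^ 2 ≤ ∑ i, (Φ.mulVec c i) ^ 2 :=
  stmt3_general p m Φ hcol μ hμ S c hc
end

section
/- Let 0 < ε < 1 and draw H uniformly from all binary r×p matrices. The probability that every nonzero codeword c of C(H) satisfies ((1-ε)/2)p ≤ w_H(c) ≤ ((1+ε)/2)p is greater than 1 - 2^{1-r} · Σ_{w=0}^{⌊(1-ε)p/2⌋} binom(p, w). -/
/-!
For a fixed nonzero `c`, the linear map `H ↦ H *ᵥ c` onto `F₂ʳ` is surjective, so exactly a
`2⁻ʳ` fraction of all matrices has `c` in its kernel. A nonzero `c` whose weight leaves the band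
either has weight at most `W = ⌊(1 - ε) p / 2⌋` or its complement `c + 1` does; there are fewer
than `2 ∑_{w ≤ W} (p choose w)` such `c`, because `0` is among the light vectors. The union bound
over these `c` (the first moment of the number of bad codewords) gives the estimate.
-/

open scoped Classical
open Finset Matrix

section HammingWeight

variable {ι : Type*} [Fintype ι]

theorem hammingNorm_add_hammingNorm_add_one (c : ι → ZMod 2) :
    hammingNorm c + hammingNorm (c + 1) = Fintype.card ι := by
  have hflip : ∀ x : ZMod 2, x + 1 ≠ 0 ↔ ¬x ≠ 0 := by decide
  rw [← card_univ, ← card_filter_add_card_filter_not (p := fun i => c i ≠ 0)]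
  simp only [hammingNorm, Pi.add_apply, Pi.one_apply, hflip]

theorem hammingNorm_le_floor_or_of_not_mem_band (ε : ℝ) (c : ι → ZMod 2)
    (hc : ¬((1 - ε) / 2 * Fintype.card ι ≤ (hammingNorm c : ℝ) ∧
      (hammingNorm c : ℝ) ≤ (1 + ε) / 2 * Fintype.card ι)) :
    hammingNorm c ≤ ⌊(1 - ε) * Fintype.card ι / 2⌋₊ ∨
      hammingNorm (c + 1) ≤ ⌊(1 - ε) * Fintype.card ι / 2⌋₊ := by
  have hsum : (hammingNorm c : ℝ) + hammingNorm (c + 1) = Fintype.card ι := by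
    exact_mod_cast hammingNorm_add_hammingNorm_add_one c
  rcases not_and_or.mp hc with h | h
  · exact .inl (Nat.le_floor (by linarith))
  · exact .inr (Nat.le_floor (by linarith))

variable [DecidableEq ι]

theorem card_filter_hammingNorm_eq (k : ℕ) :
    #{c : ι → ZMod 2 | hammingNorm c = k} = (Fintype.card ι).choose k := by
  have hZMod2 : ∀ x : ZMod 2, x ≠ 0 → x = 1 := by decide
  rw [← card_univ, ← card_powersetCard]
  refine card_nbij' (fun c => ({i | c i ≠ 0} : Finset ι)) (fun s i => if i ∈ s then 1 else 0)
    ?_ ?_ ?_ ?_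
  · intro c hc
    simpa [mem_powersetCard, hammingNorm] using hc
  · intro s hs
    simp_all [mem_powersetCard, hammingNorm]
  · intro c _
    funext i
    by_cases h : c i = 0 <;> simp [h, hZMod2]
  · intro s _
    ext i
    by_cases h : i ∈ s <;> simp [h]

theorem card_filter_hammingNorm_le (W : ℕ) :
    #{c : ι → ZMod 2 | hammingNorm c ≤ W}
      = ∑ w ∈ range (W + 1), (Fintype.card ι).choose w := by
  rw [card_eq_sum_card_fiberwise (f := hammingNorm) (t := range (W + 1))
    (fun c hc => by simpa [Nat.lt_succ_iff] using hc)]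
  refine sum_congr rfl fun w hw => ?_
  rw [filter_filter, ← card_filter_hammingNorm_eq]
  congr 1
  ext c
  simp only [mem_filter, mem_univ, true_and, and_iff_right_iff_imp]
  rintro rfl
  simpa [Nat.lt_succ_iff] using hw

theorem card_filter_ne_zero_and_hammingNorm_or_le_lt (W : ℕ) :
    #{c : ι → ZMod 2 | c ≠ 0 ∧ (hammingNorm c ≤ W ∨ hammingNorm (c + 1) ≤ W)}
      < 2 * ∑ w ∈ range (W + 1), (Fintype.card ι).choose w := by
  set A : Finset (ι → ZMod 2) := {c | hammingNorm c ≤ W}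
  set B : Finset (ι → ZMod 2) := {c | hammingNorm (c + 1) ≤ W}
  have hB : #B = #A := card_equiv (Equiv.addRight 1) (by simp [A, B])
  have h0 : (0 : ι → ZMod 2) ∈ A ∪ B := by simp [A]
  calc _ ≤ #((A ∪ B).erase 0) := card_le_card fun c => by simp [A, B]
    _ = #(A ∪ B) - 1 := card_erase_of_mem h0
    _ < #A + #B := by
      have := card_union_le A B
      have := card_pos.2 ⟨0, h0⟩
      omega
    _ = _ := by rw [hB, card_filter_hammingNorm_le, two_mul]

end HammingWeight

theorem Fintype.card_matrix {K m n : Type*} [Fintype K] [Fintype m] [Fintype n] [DecidableEq m]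
    [DecidableEq n] :
    Fintype.card (Matrix m n K) = Fintype.card K ^ (Fintype.card m * Fintype.card n) := by
  rw [show Fintype.card (Matrix m n K) = Fintype.card (m → n → K) from rfl]
  simp only [Fintype.card_pi, prod_const, card_univ, ← pow_mul, mul_comm]

section KernelCount

variable {K m n : Type*} [DivisionRing K] [Fintype n] [DecidableEq n]

theorem mulVec_left_surjective {c : n → K} (hc : c ≠ 0) :
    Function.Surjective fun H : Matrix m n K => H *ᵥ c := by
  obtain ⟨j, hj⟩ := Function.ne_iff.mp hc
  intro v
  refine ⟨vecMulVec v (Pi.single j (c j)⁻¹), ?_⟩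
  simp [vecMulVec_mulVec, single_dotProduct, inv_mul_cancel₀ hj]

variable [Fintype K] [DecidableEq K] [Fintype m] [DecidableEq m]

theorem card_filter_mulVec_eq_zero_mul {c : n → K} (hc : c ≠ 0) :
    #{H : Matrix m n K | H *ᵥ c = 0} * Fintype.card K ^ Fintype.card m
      = Fintype.card K ^ (Fintype.card m * Fintype.card n) := by
  set f := mulVec.addMonoidHomLeft (m := m) c
  have hrange : f.range = ⊤ := AddMonoidHom.range_eq_top.mpr (mulVec_left_surjective hc)
  have h := f.ker.card_mul_index
  rw [AddSubgroup.index_ker, hrange, Nat.card_congr AddSubgroup.topEquiv.toEquiv] at h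
  simp only [Nat.card_eq_fintype_card, Fintype.card_pi, prod_const, card_univ,
    Fintype.card_matrix] at h
  rw [← h, ← Fintype.card_subtype]
  exact congrArg (· * _) (Fintype.card_congr (Equiv.refl _))

theorem card_filter_exists_mulVec_eq_zero_mul_le {s : Finset (n → K)} (hs : ∀ c ∈ s, c ≠ 0) :
    #{H : Matrix m n K | ∃ c ∈ s, H *ᵥ c = 0} * Fintype.card K ^ Fintype.card m
      ≤ #s * Fintype.card K ^ (Fintype.card m * Fintype.card n) := by
  have hsub : ({H | ∃ c ∈ s, H *ᵥ c = 0} : Finset (Matrix m n K)) ⊆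
      s.biUnion fun c => ({H | H *ᵥ c = 0} : Finset (Matrix m n K)) :=
    fun H => by simp
  calc _ ≤ (∑ c ∈ s, #{H : Matrix m n K | H *ᵥ c = 0}) * Fintype.card K ^ Fintype.card m :=
        Nat.mul_le_mul_right _ ((card_le_card hsub).trans card_biUnion_le)
    _ = _ := by
      rw [sum_mul, sum_congr rfl fun c hc => card_filter_mulVec_eq_zero_mul (hs c hc),
        sum_const, smul_eq_mul]

end KernelCount

theorem card_filter_not_forall_hammingNorm_mem_band_mul_lt {m n : Type*} [Fintype m]
    [DecidableEq m] [Fintype n] [DecidableEq n] (ε : ℝ) :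
    #{H : Matrix m n (ZMod 2) | ¬∀ c : n → ZMod 2, H *ᵥ c = 0 → c ≠ 0 →
        (1 - ε) / 2 * Fintype.card n ≤ (hammingNorm c : ℝ) ∧
          (hammingNorm c : ℝ) ≤ (1 + ε) / 2 * Fintype.card n} * 2 ^ Fintype.card m
      < 2 * (∑ w ∈ range (⌊(1 - ε) * Fintype.card n / 2⌋₊ + 1), (Fintype.card n).choose w) *
          2 ^ (Fintype.card m * Fintype.card n) := by
  set W := ⌊(1 - ε) * Fintype.card n / 2⌋₊
  set badC : Finset (n → ZMod 2) := {c | c ≠ 0 ∧ (hammingNorm c ≤ W ∨ hammingNorm (c + 1) ≤ W)}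
  have hbadC : ∀ c ∈ badC, c ≠ 0 := fun c hc => (mem_filter.1 hc).2.1
  calc _ ≤ #{H : Matrix m n (ZMod 2) | ∃ c ∈ badC, H *ᵥ c = 0} * 2 ^ Fintype.card m := by
        refine Nat.mul_le_mul_right _ (card_le_card fun H hH => ?_)
        simp only [mem_filter, mem_univ, true_and, not_forall] at hH ⊢
        obtain ⟨c, hHc, hc, hband⟩ := hH
        exact ⟨c, by simpa [badC, hc] using hammingNorm_le_floor_or_of_not_mem_band ε c hband, hHc⟩
    _ ≤ #badC * 2 ^ (Fintype.card m * Fintype.card n) := by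
        simpa using card_filter_exists_mulVec_eq_zero_mul_le (m := m) hbadC
    _ < _ := Nat.mul_lt_mul_of_pos_right (card_filter_ne_zero_and_hammingNorm_or_le_lt W)
        (by positivity)

theorem stmt11_general (p r : ℕ) (ε : ℝ) :
    1 - (2 : ℝ) ^ (1 - (r : ℤ)) *
        ∑ w ∈ Finset.range (⌊(1 - ε) * p / 2⌋₊ + 1), (p.choose w : ℝ)
      < ((Finset.univ.filter (fun H : Matrix (Fin r) (Fin p) (ZMod 2) =>
          ∀ c : Fin p → ZMod 2, H.mulVec c = 0 → c ≠ 0 →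
            (1 - ε) / 2 * p ≤ (hammingNorm c : ℝ) ∧
              (hammingNorm c : ℝ) ≤ (1 + ε) / 2 * p)).card : ℝ) / 2 ^ (r * p) := by
  set good : Matrix (Fin r) (Fin p) (ZMod 2) → Prop := fun H =>
    ∀ c : Fin p → ZMod 2, H *ᵥ c = 0 → c ≠ 0 →
      (1 - ε) / 2 * p ≤ (hammingNorm c : ℝ) ∧ (hammingNorm c : ℝ) ≤ (1 + ε) / 2 * p
  have hbad := card_filter_not_forall_hammingNorm_mem_band_mul_lt (m := Fin r) (n := Fin p) ε
  simp only [Fintype.card_fin] at hbad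
  have htotal : #{H | good H} + #{H | ¬good H} = 2 ^ (r * p) := by
    rw [card_filter_add_card_filter_not, card_univ, Fintype.card_matrix]
    simp
  have hgood : (#{H | good H} : ℝ) = 2 ^ (r * p) - #{H | ¬good H} := by
    rw [eq_sub_iff_add_eq]
    exact_mod_cast htotal
  have hbadR : (#{H | ¬good H} : ℝ) * 2 ^ r
      < 2 * (∑ w ∈ range (⌊(1 - ε) * p / 2⌋₊ + 1), (p.choose w : ℝ)) * 2 ^ (r * p) := by
    exact_mod_cast hbad
  rw [hgood, zpow_sub₀ two_ne_zero, zpow_one, zpow_natCast, sub_div, div_self (by positivity),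
    sub_lt_sub_iff_left]
  field_simp
  linarith

/-- With probability more than `1 - 2^{1-r} Σ binom(p,w)`, all nonzero codewords
have weight in the band `[(1-ε)p/2, (1+ε)p/2]`. -/
theorem stmt11 (p r : ℕ) (hp : 0 < p) (ε : ℝ) (hε : 0 < ε) (hε1 : ε < 1) :
    1 - (2 : ℝ) ^ (1 - (r : ℤ)) *
        ∑ w ∈ Finset.range (⌊(1 - ε) * p / 2⌋₊ + 1), (p.choose w : ℝ)
      < ((Finset.univ.filter (fun H : Matrix (Fin r) (Fin p) (ZMod 2) =>
          ∀ c : Fin p → ZMod 2, H.mulVec c = 0 → c ≠ 0 →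
            (1 - ε) / 2 * p ≤ (hammingNorm c : ℝ) ∧
              (hammingNorm c : ℝ) ≤ (1 + ε) / 2 * p)).card : ℝ) / 2 ^ (r * p) :=
  stmt11_general p r ε
end

section
/- Let p, r be positive integers with 2^{p-r} ≥ p and m = 2^{p-r} - 1. Draw H uniformly from binary r×p matrices and let Φ(H) be the p×m matrix whose columns are β_p(c) for m distinct nonzero codewords c of C(H) (when |C(H)| ≥ m+1). If S < Z·√(p / log₂ m) with Z = (√2 - 1)/(2√6), then with probability greater than 1 - 2^{1-p+r}, the restricted isometry constant satisfies δ_{2S}(Φ(H)) < √2 - 1. -/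
/-!
A fixed nonzero word lies in the null space of a uniform random `H` with probability `2^{-r}`,
and by a Chernoff bound at most `2^{p+1} e^{-2t²/p}` words have weight farther than `t` from
`p/2`. A union bound therefore makes every nonzero codeword of `C(H)` have weight within `t` of
`p/2`, except with probability `2^{p+1-r} e^{-2t²/p}`. For such `H`, distinct codewords `a, b`
have `⟨β_p a, β_p b⟩ = 1 - 2 d(a, b)/p`, of modulus at most `ε = 2t/p`, while each `β_p a` is a
unit vector; for an `s`-sparse `x` this gives `|‖Φx‖² - ‖x‖²| ≤ (∑ |xᵢ|)² ε ≤ s ε ‖x‖²`, so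
`δ_{2S} ≤ 2Sε`. With `ε = √(6 log₂ m / p)` the hypothesis on `S` is exactly `2Sε < √2 - 1`,
and the failure probability is at most `2^{p+1-r} m^{-3} < 2^{1-p+r}`, as `4^{p-r} < m³`.
-/

open scoped Classical

/-- Binary to bipolar conversion. -/
noncomputable def bip (p : ℕ) (a : Fin p → ZMod 2) : Fin p → ℝ :=
  fun k => (1 - 2 * ((a k).val : ℝ)) / Real.sqrt p

open Finset Real
open scoped Matrix

section Incoherence

variable {ι κ : Type*} [Fintype ι] [Fintype κ]

lemma sum_sq_sum_mul_eq (φ : ι → κ → ℝ) (x : ι → ℝ) :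
    ∑ k, (∑ j, φ j k * x j) ^ 2 = ∑ i, ∑ j, x i * x j * ∑ k, φ i k * φ j k := by
  simp_rw [sq, sum_mul_sum, mul_sum]
  rw [sum_comm]
  refine sum_congr rfl fun i _ => ?_
  rw [sum_comm]
  exact sum_congr rfl fun j _ => sum_congr rfl fun k _ => by ring

lemma sq_sum_abs_le_card_support_mul (x : ι → ℝ) :
    (∑ i, |x i|) ^ 2 ≤ #{i | x i ≠ 0} * ∑ i, x i ^ 2 := by
  have hsupp : ∑ i, |x i| = ∑ i ∈ {i | x i ≠ 0}, |x i| :=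
    (sum_subset (subset_univ _) fun i _ hi => by simp_all).symm
  calc (∑ i, |x i|) ^ 2 ≤ #{i | x i ≠ 0} * ∑ i ∈ {i | x i ≠ 0}, |x i| ^ 2 := by
        rw [hsupp]; exact sq_sum_le_card_mul_sum_sq
    _ ≤ #{i | x i ≠ 0} * ∑ i, x i ^ 2 := by
        simp only [sq_abs]
        gcongr
        exact subset_univ _

lemma abs_sum_sq_sub_le_of_incoherent (φ : ι → κ → ℝ) {ε : ℝ} (hε : 0 ≤ ε)
    (hnorm : ∀ i, ∑ k, φ i k * φ i k = 1)
    (hcoh : ∀ i j, i ≠ j → |∑ k, φ i k * φ j k| ≤ ε) (x : ι → ℝ) :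
    |∑ k, (∑ j, φ j k * x j) ^ 2 - ∑ i, x i ^ 2|
      ≤ #{i | x i ≠ 0} * ε * ∑ i, x i ^ 2 := by
  have hdiag : ∑ i, x i ^ 2 = ∑ i, ∑ j, x i * x j * if i = j then 1 else 0 := by
    simp [sq]
  have hterm : ∀ i j, |x i * x j * ((∑ k, φ i k * φ j k) - if i = j then 1 else 0)|
      ≤ |x i| * |x j| * ε := by
    intro i j
    rw [abs_mul, abs_mul]
    gcongr
    split_ifs with hij
    · simp [hij, hnorm, hε]
    · simpa using hcoh i j hij
  calc |∑ k, (∑ j, φ j k * x j) ^ 2 - ∑ i, x i ^ 2|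
      = |∑ i, ∑ j, x i * x j * ((∑ k, φ i k * φ j k) - if i = j then 1 else 0)| := by
        simp only [sum_sq_sum_mul_eq, hdiag, ← sum_sub_distrib, mul_sub]
    _ ≤ ∑ i, ∑ j, |x i| * |x j| * ε :=
        (abs_sum_le_sum_abs _ _).trans <| sum_le_sum fun i _ =>
          (abs_sum_le_sum_abs _ _).trans <| sum_le_sum fun j _ => hterm i j
    _ = (∑ i, |x i|) ^ 2 * ε := by rw [sq, sum_mul_sum, sum_mul]; simp only [sum_mul]
    _ ≤ #{i | x i ≠ 0} * ε * ∑ i, x i ^ 2 := by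
        nlinarith [sq_sum_abs_le_card_support_mul x]

lemma sInf_rip_le_of_incoherent (φ : ι → κ → ℝ) (s : ℕ) {ε : ℝ} (hε : 0 ≤ ε)
    (hnorm : ∀ i, ∑ k, φ i k * φ i k = 1)
    (hcoh : ∀ i j, i ≠ j → |∑ k, φ i k * φ j k| ≤ ε) :
    sInf {δ : ℝ | 0 ≤ δ ∧ ∀ x : ι → ℝ,
        (univ.filter (fun i => x i ≠ 0)).card ≤ s →
        (1 - δ) * (∑ i, (x i) ^ 2) ≤ (∑ k, (∑ j, φ j k * x j) ^ 2) ∧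
          (∑ k, (∑ j, φ j k * x j) ^ 2) ≤ (1 + δ) * (∑ i, (x i) ^ 2)} ≤ s * ε := by
  refine csInf_le ⟨0, fun _ hδ => hδ.1⟩ ⟨by positivity, fun x hx => ?_⟩
  have hsupp : (#{i | x i ≠ 0} : ℝ) * ε * ∑ i, x i ^ 2 ≤ s * ε * ∑ i, x i ^ 2 := by
    gcongr
  have := (abs_sum_sq_sub_le_of_incoherent φ hε hnorm hcoh x).trans hsupp
  rw [abs_le] at this
  constructor <;> linarith

end Incoherence

section Bipolar

variable {p : ℕ}

lemma bip_mul_bip (a b : Fin p → ZMod 2) (k : Fin p) :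
    bip p a k * bip p b k = (1 - 2 * if a k ≠ b k then 1 else 0) / p := by
  have hsign : ∀ x y : ZMod 2,
      (1 - 2 * (x.val : ℝ)) * (1 - 2 * y.val) = 1 - 2 * if x ≠ y then 1 else 0 := by
    have h01 : ∀ x : ZMod 2, x = 0 ∨ x = 1 := by decide
    intro x y
    rcases h01 x with rfl | rfl <;> rcases h01 y with rfl | rfl <;>
      norm_num [show (1 : ZMod 2).val = 1 from rfl]
  rw [bip, bip, div_mul_div_comm, hsign, ← sq, sq_sqrt (Nat.cast_nonneg p)]

lemma inner_bip (hp : p ≠ 0) (a b : Fin p → ZMod 2) :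
    ∑ k, bip p a k * bip p b k = 1 - 2 * hammingDist a b / p := by
  simp only [bip_mul_bip, ← sum_div, sum_sub_distrib, ← mul_sum, sum_boole]
  simp only [sum_const, card_univ, Fintype.card_fin, nsmul_eq_mul, mul_one, hammingDist]
  field_simp

lemma inner_bip_self (hp : p ≠ 0) (a : Fin p → ZMod 2) :
    ∑ k, bip p a k * bip p a k = 1 := by
  simp [inner_bip hp]

lemma abs_inner_bip_le (hp : p ≠ 0) {a b : Fin p → ZMod 2} {t : ℝ}
    (h : |(hammingDist a b : ℝ) - p / 2| ≤ t) :
    |∑ k, bip p a k * bip p b k| ≤ 2 * t / p := by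
  have hcentre : 1 - 2 * (hammingDist a b : ℝ) / p = -(2 / p) * (hammingDist a b - p / 2) := by
    field_simp
    ring
  rw [inner_bip hp, hcentre, abs_mul, abs_neg, abs_of_pos (by positivity), div_mul_eq_mul_div]
  gcongr

end Bipolar

section WeightConcentration

variable {ι : Type*} [Fintype ι] [DecidableEq ι]

lemma card_lt_abs_le_mul_sum_exp {α : Type*} [Fintype α] (f : α → ℝ) (t : ℝ) {l : ℝ}
    (hl : 0 ≤ l) :
    (#{a | t < |f a|} : ℝ) ≤ exp (-(l * t)) * ∑ a, (exp (l * f a) + exp (-l * f a)) := by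
  rw [mul_sum]
  calc (#{a | t < |f a|} : ℝ) = ∑ a ∈ {a | t < |f a|}, 1 := by simp
    _ ≤ ∑ a ∈ {a | t < |f a|}, exp (-(l * t)) * (exp (l * f a) + exp (-l * f a)) := by
        refine sum_le_sum fun a ha => ?_
        have hta : l * t ≤ l * |f a| := mul_le_mul_of_nonneg_left (mem_filter.1 ha).2.le hl
        rw [mul_add, ← exp_add, ← exp_add]
        rcases abs_cases (f a) with ⟨h, _⟩ | ⟨h, _⟩
        · have := one_le_exp (x := -(l * t) + l * f a) (by rw [h] at hta; linarith)
          linarith [exp_pos (-(l * t) + -l * f a)]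
        · have := one_le_exp (x := -(l * t) + -l * f a) (by rw [h] at hta; linarith)
          linarith [exp_pos (-(l * t) + l * f a)]
    _ ≤ _ := sum_le_sum_of_subset_of_nonneg (subset_univ _) fun _ _ _ => by positivity

lemma sum_exp_mul_hammingNorm_sub_le (μ : ℝ) :
    ∑ v : ι → ZMod 2, exp (μ * (hammingNorm v - Fintype.card ι / 2))
      ≤ 2 ^ Fintype.card ι * exp (Fintype.card ι * μ ^ 2 / 8) := by
  set g : ZMod 2 → ℝ := fun b => exp (μ * ((if b ≠ 0 then 1 else 0) - 1 / 2))
  have hprod : ∀ v : ι → ZMod 2,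
      exp (μ * (hammingNorm v - Fintype.card ι / 2)) = ∏ i, g (v i) := by
    intro v
    rw [← exp_sum, hammingNorm, ← sum_boole]
    simp only [sum_sub_distrib, ← mul_sum, sum_const, card_univ, nsmul_eq_mul]
    ring_nf
  have hcoord : ∑ b, g b = 2 * cosh (μ / 2) := by
    rw [cosh_eq, show (univ : Finset (ZMod 2)) = {0, 1} from rfl, sum_pair zero_ne_one]
    norm_num [g]
    ring_nf
  calc ∑ v : ι → ZMod 2, exp (μ * (hammingNorm v - Fintype.card ι / 2))
      = ∏ _i : ι, ∑ b, g b := by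
        rw [Fintype.prod_sum]
        exact sum_congr rfl fun v _ => hprod v
    _ = (2 * cosh (μ / 2)) ^ Fintype.card ι := by rw [hcoord, prod_const, card_univ]
    _ ≤ (2 * exp ((μ / 2) ^ 2 / 2)) ^ Fintype.card ι := by
        gcongr
        exact cosh_le_exp_half_sq _
    _ = 2 ^ Fintype.card ι * exp (Fintype.card ι * μ ^ 2 / 8) := by
        rw [mul_pow, ← exp_nat_mul]
        ring_nf

lemma card_lt_abs_hammingNorm_sub_le [Nonempty ι] {t : ℝ} (ht : 0 ≤ t) :
    (#{v : ι → ZMod 2 | t < |(hammingNorm v : ℝ) - Fintype.card ι / 2|} : ℝ)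
      ≤ 2 ^ (Fintype.card ι + 1) * exp (-(2 * t ^ 2 / Fintype.card ι)) := by
  set n := (Fintype.card ι : ℝ)
  have hn : 0 < n := by simp [n, Fintype.card_pos]
  -- `l = 4t/n` minimises the Chernoff exponent `-l t + n l² / 8`
  set l := 4 * t / n
  calc (#{v : ι → ZMod 2 | t < |(hammingNorm v : ℝ) - n / 2|} : ℝ)
      ≤ exp (-(l * t)) * ∑ v : ι → ZMod 2,
          (exp (l * (hammingNorm v - n / 2)) + exp (-l * (hammingNorm v - n / 2))) :=
        card_lt_abs_le_mul_sum_exp _ t (by positivity)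
    _ ≤ exp (-(l * t)) * (2 * (2 ^ Fintype.card ι * exp (n * l ^ 2 / 8))) := by
        rw [sum_add_distrib, two_mul]
        gcongr
        · exact sum_exp_mul_hammingNorm_sub_le _
        · simpa only [neg_sq] using sum_exp_mul_hammingNorm_sub_le (ι := ι) (-l)
    _ = 2 ^ (Fintype.card ι + 1) * exp (-(2 * t ^ 2 / n)) := by
        have hexp : -(l * t) + n * l ^ 2 / 8 = -(2 * t ^ 2 / n) := by
          simp only [l]
          field_simp
          ring
        rw [← hexp, exp_add, pow_succ]
        ring

end WeightConcentration

section KernelCount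

variable {K m n : Type*} [Field K] [Fintype n]

lemma surjective_mulVec_left {v : n → K} (hv : v ≠ 0) :
    Function.Surjective fun H : Matrix m n K => H *ᵥ v := by
  obtain ⟨j, hj⟩ : ∃ j, v j ≠ 0 := Function.ne_iff.1 hv
  intro w
  refine ⟨Matrix.vecMulVec w (Pi.single j (v j)⁻¹), ?_⟩
  simp [Matrix.vecMulVec_mulVec, hj]

variable [Fintype K] [DecidableEq K] [Fintype m] [DecidableEq m] [DecidableEq n]

lemma card_mulVec_eq_zero_mul {v : n → K} (hv : v ≠ 0) :
    #{H : Matrix m n K | H *ᵥ v = 0} * Fintype.card K ^ Fintype.card m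
      = Fintype.card K ^ (Fintype.card m * Fintype.card n) := by
  let f : Matrix m n K →+ (m → K) := Matrix.mulVec.addMonoidHomLeft v
  have hker : Nat.card f.ker = #{H : Matrix m n K | H *ᵥ v = 0} := by
    rw [← Fintype.card_subtype, ← Nat.card_eq_fintype_card]
    rfl
  have hrange : Nat.card f.range = Fintype.card K ^ Fintype.card m := by
    rw [AddMonoidHom.range_eq_top.2 (surjective_mulVec_left hv)]
    simp
  rw [← hker, ← hrange, ← AddSubgroup.index_ker, AddSubgroup.card_mul_index]
  simp [Matrix, ← pow_mul, mul_comm]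

lemma card_exists_mulVec_eq_zero_mul_le (B : Finset (n → K)) (hB : (0 : n → K) ∉ B) :
    #{H : Matrix m n K | ∃ v ∈ B, H *ᵥ v = 0} * Fintype.card K ^ Fintype.card m
      ≤ #B * Fintype.card K ^ (Fintype.card m * Fintype.card n) := by
  have hunion : ({H : Matrix m n K | ∃ v ∈ B, H *ᵥ v = 0} : Finset _)
      = B.biUnion fun v => {H : Matrix m n K | H *ᵥ v = 0} := by
    ext H; simp
  calc #{H : Matrix m n K | ∃ v ∈ B, H *ᵥ v = 0} * Fintype.card K ^ Fintype.card m
      ≤ (∑ v ∈ B, #{H : Matrix m n K | H *ᵥ v = 0}) * Fintype.card K ^ Fintype.card m := by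
        rw [hunion]; gcongr; exact card_biUnion_le
    _ = #B * Fintype.card K ^ (Fintype.card m * Fintype.card n) := by
        rw [sum_mul, sum_congr rfl fun v hv => card_mulVec_eq_zero_mul (ne_of_mem_of_not_mem hv hB),
          sum_const, smul_eq_mul]

end KernelCount

section RandomCode

variable {r p : ℕ}

def KerWeightConcentrated (H : Matrix (Fin r) (Fin p) (ZMod 2)) (t : ℝ) : Prop :=
  ∀ v, v ≠ 0 → H *ᵥ v = 0 → |(hammingNorm v : ℝ) - p / 2| ≤ t

lemma sInf_rip_codewords_le (hp : p ≠ 0) {H : Matrix (Fin r) (Fin p) (ZMod 2)} {t : ℝ}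
    (ht : 0 ≤ t) (hH : KerWeightConcentrated H t) (s : ℕ) {m : ℕ}
    (c : Fin m → Fin p → ZMod 2) (hc : Function.Injective c) (hker : ∀ j, H *ᵥ c j = 0) :
    sInf {δ : ℝ | 0 ≤ δ ∧ ∀ x : Fin m → ℝ,
        (univ.filter (fun i => x i ≠ 0)).card ≤ s →
        (1 - δ) * (∑ i, (x i) ^ 2) ≤ (∑ k, (∑ j, bip p (c j) k * x j) ^ 2) ∧
          (∑ k, (∑ j, bip p (c j) k * x j) ^ 2) ≤ (1 + δ) * (∑ i, (x i) ^ 2)}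
      ≤ s * (2 * t / p) := by
  refine sInf_rip_le_of_incoherent _ s (by positivity) (fun i => inner_bip_self hp _)
    fun i j hij => abs_inner_bip_le hp ?_
  rw [hammingDist_eq_hammingNorm]
  refine hH _ (fun h => hij (hc (neg_add_eq_zero.1 h))) ?_
  rw [Matrix.mulVec_add, Matrix.mulVec_neg, hker, hker, neg_zero, add_zero]

lemma card_not_kerWeightConcentrated_mul_le (hp : p ≠ 0) {t : ℝ} (ht : 0 ≤ t) :
    (#{H : Matrix (Fin r) (Fin p) (ZMod 2) | ¬KerWeightConcentrated H t} : ℝ) * 2 ^ r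
      ≤ 2 ^ (p + 1) * exp (-(2 * t ^ 2 / p)) * 2 ^ (r * p) := by
  have : Nonempty (Fin p) := ⟨⟨0, Nat.pos_of_ne_zero hp⟩⟩
  set B : Finset (Fin p → ZMod 2) := {v | v ≠ 0 ∧ t < |(hammingNorm v : ℝ) - p / 2|}
  have hbad : ({H | ¬KerWeightConcentrated H t} : Finset (Matrix (Fin r) (Fin p) (ZMod 2)))
      = ({H | ∃ v ∈ B, H *ᵥ v = 0} : Finset (Matrix (Fin r) (Fin p) (ZMod 2))) := by
    ext H
    simp only [KerWeightConcentrated, B, mem_filter, mem_univ, true_and, not_forall, not_le,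
      exists_prop]
    exact exists_congr fun v => by tauto
  have hunion := card_exists_mulVec_eq_zero_mul_le (m := Fin r) B (by simp [B])
  rw [← hbad] at hunion
  simp only [ZMod.card, Fintype.card_fin] at hunion
  have hB : (#B : ℝ) ≤ 2 ^ (p + 1) * exp (-(2 * t ^ 2 / p)) := by
    refine le_trans ?_ (by simpa using card_lt_abs_hammingNorm_sub_le (ι := Fin p) ht)
    exact_mod_cast card_le_card fun v hv => by
      simp only [B, mem_filter] at hv ⊢
      exact ⟨hv.1, hv.2.2⟩
  calc _ ≤ (#B : ℝ) * 2 ^ (r * p) := by exact_mod_cast hunion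
    _ ≤ _ := by gcongr

lemma one_sub_le_card_kerWeightConcentrated_div (hp : p ≠ 0) {t : ℝ} (ht : 0 ≤ t) :
    1 - 2 ^ (p + 1) * exp (-(2 * t ^ 2 / p)) / 2 ^ r
      ≤ (#{H : Matrix (Fin r) (Fin p) (ZMod 2) | KerWeightConcentrated H t} : ℝ)
        / 2 ^ (r * p) := by
  have hcard : Fintype.card (Matrix (Fin r) (Fin p) (ZMod 2)) = 2 ^ (r * p) := by
    rw [Fintype.card_eq_nat_card]
    simp [Matrix, ← pow_mul, mul_comm]
  have hsum := card_filter_add_card_filter_not (s := univ)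
    (KerWeightConcentrated (r := r) (p := p) · t)
  rw [card_univ, hcard] at hsum
  have hsumR : (#{H : Matrix (Fin r) (Fin p) (ZMod 2) | KerWeightConcentrated H t} : ℝ)
      + #{H : Matrix (Fin r) (Fin p) (ZMod 2) | ¬KerWeightConcentrated H t} = 2 ^ (r * p) := by
    exact_mod_cast hsum
  have hbad := card_not_kerWeightConcentrated_mul_le (r := r) hp ht
  rw [← le_div_iff₀ (by positivity)] at hbad
  rw [le_div_iff₀ (by positivity), sub_mul, one_mul, div_mul_eq_mul_div]
  linarith

end RandomCode

lemma four_pow_lt_exp_three_mul_logb {k : ℕ} (hk : 2 ≤ k) :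
    (4 : ℝ) ^ k < exp (3 * logb 2 ((2 ^ k - 1 : ℕ) : ℝ)) := by
  have ha : (4 : ℝ) ≤ 2 ^ k := by
    calc (4 : ℝ) = 2 ^ 2 := by norm_num
      _ ≤ 2 ^ k := pow_le_pow_right₀ one_le_two hk
  have hcast : ((2 ^ k - 1 : ℕ) : ℝ) = 2 ^ k - 1 := by
    rw [Nat.cast_sub Nat.one_le_two_pow]; push_cast; ring
  set a : ℝ := 2 ^ k
  have hlog : 0 ≤ log (a - 1) := log_nonneg (by linarith)
  have hlogb : log (a - 1) ≤ logb 2 (a - 1) :=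
    le_div_self hlog (log_pos one_lt_two) (log_two_lt_d9.le.trans (by norm_num))
  calc (4 : ℝ) ^ k = a ^ 2 := by
        rw [show (4 : ℝ) = 2 ^ 2 by norm_num, ← pow_mul, mul_comm, pow_mul]
    _ < (a - 1) ^ 3 := by nlinarith
    _ = exp (3 * log (a - 1)) := by
        rw [show (3 : ℝ) = (3 : ℕ) by norm_num, exp_nat_mul, exp_log (by linarith)]
    _ ≤ exp (3 * logb 2 ((2 ^ k - 1 : ℕ) : ℝ)) := by
        rw [hcast]; gcongr

lemma two_mul_mul_sqrt_lt {S p L : ℝ} (hp : 0 < p) (hL : 0 < L)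
    (hS : S < (√2 - 1) / (2 * √6) * √(p / L)) :
    2 * S * √(6 * L / p) < √2 - 1 := by
  have hroot : √(p / L) * √(6 * L / p) = √6 := by
    rw [← sqrt_mul (by positivity)]
    congr 1
    field_simp
  calc 2 * S * √(6 * L / p) < 2 * ((√2 - 1) / (2 * √6) * √(p / L)) * √(6 * L / p) := by
        gcongr
    _ = √2 - 1 := by
        rw [mul_assoc, mul_assoc, hroot]
        field_simp

lemma pos_of_lt_mul_sqrt_div {S p L : ℝ} (hS0 : 0 ≤ S) (hp : 0 ≤ p)
    (hS : S < (√2 - 1) / (2 * √6) * √(p / L)) : 0 < L := by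
  have hZ : 0 ≤ (√2 - 1) / (2 * √6) :=
    div_nonneg (sub_nonneg.2 one_lt_sqrt_two.le) (by positivity)
  have hpL := sqrt_pos.1 (pos_of_mul_pos_right (hS0.trans_lt hS) hZ)
  by_contra h
  exact (div_nonpos_of_nonneg_of_nonpos hp (not_lt.1 h)).not_gt hpL

lemma two_le_sub_of_logb_pos {p r : ℕ} (h : 0 < logb 2 ((2 ^ (p - r) - 1 : ℕ) : ℝ)) :
    2 ≤ p - r := by
  have hm : 1 < 2 ^ (p - r) - 1 := by
    rcases Nat.eq_zero_or_pos (2 ^ (p - r) - 1) with h0 | h0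
    · simp [h0] at h
    · exact_mod_cast (logb_pos_iff one_lt_two (by exact_mod_cast h0)).1 h
  by_contra hlt
  have : 2 ^ (p - r) ≤ 2 ^ 1 := Nat.pow_le_pow_right two_pos (by omega)
  omega

lemma two_pow_mul_exp_div_lt {p r : ℕ} (hk : 2 ≤ p - r) :
    2 ^ (p + 1) * exp (-(3 * logb 2 ((2 ^ (p - r) - 1 : ℕ) : ℝ))) / 2 ^ r
      < (2 : ℝ) ^ (1 - (p : ℝ) + r) := by
  obtain ⟨k, rfl⟩ : ∃ k, p = r + k := ⟨p - r, by omega⟩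
  rw [Nat.add_sub_cancel_left] at hk ⊢
  have h4 := four_pow_lt_exp_three_mul_logb hk
  rw [show (4 : ℝ) ^ k = 2 ^ k * 2 ^ k by rw [← mul_pow]; norm_num] at h4
  rw [show 1 - ((r + k : ℕ) : ℝ) + r = 1 - k by push_cast; ring, rpow_sub two_pos, rpow_one,
    rpow_natCast, exp_neg, pow_add, pow_succ]
  set E := exp (3 * logb 2 ((2 ^ k - 1 : ℕ) : ℝ))
  have hE : 0 < E := exp_pos _
  rw [div_lt_div_iff₀ (by positivity) (by positivity)]
  field_simp
  rw [pow_add]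
  nlinarith [mul_lt_mul_of_pos_left h4 (pow_pos two_pos r : (0 : ℝ) < 2 ^ r)]

theorem stmt18_general (p r : ℕ) (m : ℕ) (hm : m = 2 ^ (p - r) - 1)
    (S : ℕ)
    (hS : (S : ℝ) <
      (Real.sqrt 2 - 1) / (2 * Real.sqrt 6) * Real.sqrt ((p : ℝ) / Real.logb 2 m)) :
    1 - (2 : ℝ) ^ (1 - (p : ℝ) + r) <
      ((Finset.univ.filter (fun H : Matrix (Fin r) (Fin p) (ZMod 2) =>
          ∀ c : Fin m → (Fin p → ZMod 2), Function.Injective c →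
            (∀ j, H.mulVec (c j) = 0 ∧ c j ≠ 0) →
            sInf {δ : ℝ | 0 ≤ δ ∧ ∀ x : Fin m → ℝ,
                (Finset.univ.filter (fun i => x i ≠ 0)).card ≤ 2 * S →
                (1 - δ) * (∑ i, (x i) ^ 2)
                    ≤ (∑ k, (∑ j, bip p (c j) k * x j) ^ 2) ∧
                  (∑ k, (∑ j, bip p (c j) k * x j) ^ 2)
                    ≤ (1 + δ) * (∑ i, (x i) ^ 2)}
              < Real.sqrt 2 - 1)).card : ℝ) / 2 ^ (r * p) := by
  set L := logb 2 m
  have hL : 0 < L := pos_of_lt_mul_sqrt_div (Nat.cast_nonneg S) (Nat.cast_nonneg p) hS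
  have hk : 2 ≤ p - r := two_le_sub_of_logb_pos (hm ▸ hL)
  have hp : 0 < (p : ℝ) := by exact_mod_cast (by omega : 0 < p)
  set t := √(6 * L / p) * p / 2
  have ht : 2 * t ^ 2 / p = 3 * L := by
    rw [div_pow, mul_pow, sq_sqrt (by positivity)]
    field_simp
    ring
  calc 1 - (2 : ℝ) ^ (1 - (p : ℝ) + r) < 1 - 2 ^ (p + 1) * exp (-(2 * t ^ 2 / p)) / 2 ^ r := by
        rw [ht]
        linarith [hm ▸ two_pow_mul_exp_div_lt hk]
    _ ≤ (#{H : Matrix (Fin r) (Fin p) (ZMod 2) | KerWeightConcentrated H t} : ℝ)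
          / 2 ^ (r * p) :=
        one_sub_le_card_kerWeightConcentrated_div (by omega) (by positivity)
    _ ≤ _ := by
        gcongr
        intro hH c hc hker
        refine (sInf_rip_codewords_le (by omega) (by positivity) hH (2 * S) c hc
          fun j => (hker j).1).trans_lt ?_
        calc ((2 * S : ℕ) : ℝ) * (2 * t / p) = 2 * S * √(6 * L / p) := by
              push_cast
              field_simp
              ring
          _ < √2 - 1 := two_mul_mul_sqrt_lt hp hL hS

/-- Main theorem: if `S < Z √(p / log₂ m)` with `Z = (√2-1)/(2√6)`, then with
probability greater than `1 - 2^{1-p+r}` over a uniform random `H`, every sensing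
matrix built from `m` distinct nonzero codewords of `C(H)` has RIP constant
`δ_{2S} < √2 - 1`. -/
theorem stmt18 (p r : ℕ) (hp : 0 < p) (hr : 0 < r) (hrp : r ≤ p)
    (h2 : p ≤ 2 ^ (p - r)) (m : ℕ) (hm : m = 2 ^ (p - r) - 1)
    (S : ℕ)
    (hS : (S : ℝ) <
      (Real.sqrt 2 - 1) / (2 * Real.sqrt 6) * Real.sqrt ((p : ℝ) / Real.logb 2 m)) :
    1 - (2 : ℝ) ^ (1 - (p : ℝ) + r) <
      ((Finset.univ.filter (fun H : Matrix (Fin r) (Fin p) (ZMod 2) =>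
          ∀ c : Fin m → (Fin p → ZMod 2), Function.Injective c →
            (∀ j, H.mulVec (c j) = 0 ∧ c j ≠ 0) →
            sInf {δ : ℝ | 0 ≤ δ ∧ ∀ x : Fin m → ℝ,
                (Finset.univ.filter (fun i => x i ≠ 0)).card ≤ 2 * S →
                (1 - δ) * (∑ i, (x i) ^ 2)
                    ≤ (∑ k, (∑ j, bip p (c j) k * x j) ^ 2) ∧
                  (∑ k, (∑ j, bip p (c j) k * x j) ^ 2)
                    ≤ (1 + δ) * (∑ i, (x i) ^ 2)}
              < Real.sqrt 2 - 1)).card : ℝ) / 2 ^ (r * p) :=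
  stmt18_general p r m hm S hS
end
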